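/- Let s(t) = 1/(1+e^{-t}) be the sigmoid function. Let N be a finite index set, let e_j ≥ 0 be weights with ∑_{j∈N} e_j = 1, and let n_j be real numbers for j∈N. Then |s(∑_{j∈N} e_j n_j) - 1/2 - (1/4)∑_{j∈N} e_j n_j| ≤ (1/48)(∑_{j∈N} e_j |n_j|)^3. In particular, the contribution of the high-order (cubic) interaction terms of the neighborhood values n_j to the activated output has coefficient of magnitude at most 1/48. -/

import Mathlib

/-!
Write `g = sigmoid - 1/2`. It solves `g' = 1/4 - g²` with `g 0 = 0`. Since `g' ≤ 1/4`, the
remainder `h x = g x - x/4` is antitone; with `g` monotone this gives `|g x| ≤ |x|/4`, hence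
`h' = -g² ≥ -x²/16`, so `h + x³/48` is monotone. Both vanish at `0`, which traps `h x` between `0`
and `-x³/48` on either side of the origin. Finally `|∑ eⱼ nⱼ| ≤ ∑ eⱼ |nⱼ|` for nonnegative weights.
-/

namespace Real

lemma hasDerivAt_sigmoid_eq_sub_sq (x : ℝ) :
    HasDerivAt sigmoid (1 / 4 - (sigmoid x - 1 / 2) ^ 2) x := by
  convert hasDerivAt_sigmoid x using 1
  ring

lemma sigmoid_zero_eq_half : sigmoid 0 = 1 / 2 := by rw [sigmoid_zero, one_div]

lemma antitone_sigmoid_sub_div_four : Antitone fun x => sigmoid x - x / 4 := by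
  refine antitone_of_deriv_nonpos (differentiable_sigmoid.sub (differentiable_id.div_const 4))
    fun x => ?_
  rw [((hasDerivAt_sigmoid_eq_sub_sq x).fun_sub ((hasDerivAt_id' x).div_const 4)).deriv]
  nlinarith [sq_nonneg (sigmoid x - 1 / 2)]

lemma abs_sigmoid_sub_half_le (x : ℝ) : |sigmoid x - 1 / 2| ≤ |x| / 4 := by
  rcases le_total 0 x with hx | hx
  · have hmono := sigmoid_monotone hx
    have hanti := antitone_sigmoid_sub_div_four hx
    simp only [sigmoid_zero_eq_half, zero_div, sub_zero] at hmono hanti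
    rw [abs_of_nonneg hx, abs_le]
    constructor <;> linarith
  · have hmono := sigmoid_monotone hx
    have hanti := antitone_sigmoid_sub_div_four hx
    simp only [sigmoid_zero_eq_half, zero_div, sub_zero] at hmono hanti
    rw [abs_of_nonpos hx, abs_le]
    constructor <;> linarith

lemma monotone_sigmoid_sub_div_four_add_cube :
    Monotone fun x => sigmoid x - x / 4 + x ^ 3 / 48 := by
  refine monotone_of_deriv_nonneg (by fun_prop) fun x => ?_
  rw [(((hasDerivAt_sigmoid_eq_sub_sq x).fun_sub ((hasDerivAt_id' x).div_const 4)).fun_add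
    ((hasDerivAt_pow 3 x).div_const 48)).deriv]
  have hg : (sigmoid x - 1 / 2) ^ 2 ≤ (x / 4) ^ 2 := by
    rw [sq_le_sq, abs_div, abs_of_pos (by norm_num : (0 : ℝ) < 4)]
    exact abs_sigmoid_sub_half_le x
  norm_num
  linarith

lemma abs_sigmoid_sub_half_sub_div_four_le (x : ℝ) :
    |sigmoid x - 1 / 2 - x / 4| ≤ |x| ^ 3 / 48 := by
  rcases le_total 0 x with hx | hx
  · have hanti := antitone_sigmoid_sub_div_four hx
    have hmono := monotone_sigmoid_sub_div_four_add_cube hx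
    simp only [sigmoid_zero_eq_half] at hanti hmono
    rw [abs_of_nonneg hx, abs_le]
    constructor <;> linarith
  · have hanti := antitone_sigmoid_sub_div_four hx
    have hmono := monotone_sigmoid_sub_div_four_add_cube hx
    simp only [sigmoid_zero_eq_half] at hanti hmono
    rw [abs_of_nonpos hx, abs_le, neg_pow, Odd.neg_one_pow (by decide)]
    constructor <;> linarith

end Real

theorem sigmoid_convex_combination_interaction_bound_general
    (s : ℝ → ℝ) (hs : ∀ t, s t = 1 / (1 + Real.exp (-t)))
    {ι : Type*} (N : Finset ι) (e : ι → ℝ) (n : ι → ℝ)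
    (he : ∀ j ∈ N, 0 ≤ e j) :
    |s (∑ j ∈ N, e j * n j) - 1 / 2 - (1 / 4) * ∑ j ∈ N, e j * n j| ≤
      (1 / 48) * (∑ j ∈ N, e j * |n j|) ^ 3 := by
  have hs_eq : s = Real.sigmoid := funext fun t => by rw [hs, Real.sigmoid_def, one_div]
  have habs : |∑ j ∈ N, e j * n j| ≤ ∑ j ∈ N, e j * |n j| :=
    (Finset.abs_sum_le_sum_abs _ _).trans_eq <|
      Finset.sum_congr rfl fun j hj => by rw [abs_mul, abs_of_nonneg (he j hj)]
  calc |s (∑ j ∈ N, e j * n j) - 1 / 2 - (1 / 4) * ∑ j ∈ N, e j * n j|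
      = |Real.sigmoid (∑ j ∈ N, e j * n j) - 1 / 2 - (∑ j ∈ N, e j * n j) / 4| := by
        rw [hs_eq, one_div_mul_eq_div]
    _ ≤ |∑ j ∈ N, e j * n j| ^ 3 / 48 := Real.abs_sigmoid_sub_half_sub_div_four_le _
    _ ≤ (1 / 48) * (∑ j ∈ N, e j * |n j|) ^ 3 := by
        rw [one_div_mul_eq_div]
        gcongr

/-- Scalar form of Proposition 1: applying the sigmoid to a convex combination
`∑ j in N, e j * n j` of neighborhood values, the deviation from the linear
Taylor part is bounded by `(1/48) * (∑ j in N, e j * |n j|)^3`. -/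
theorem sigmoid_convex_combination_interaction_bound
    (s : ℝ → ℝ) (hs : ∀ t, s t = 1 / (1 + Real.exp (-t)))
    {ι : Type*} (N : Finset ι) (e : ι → ℝ) (n : ι → ℝ)
    (he : ∀ j ∈ N, 0 ≤ e j) (hsum : ∑ j ∈ N, e j = 1) :
    |s (∑ j ∈ N, e j * n j) - 1 / 2 - (1 / 4) * ∑ j ∈ N, e j * n j| ≤
      (1 / 48) * (∑ j ∈ N, e j * |n j|) ^ 3 :=
  sigmoid_convex_combination_interaction_bound_general s hs N e n he
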